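/- For positive integers ℓ, m and variables e, f, the polynomial P_{(ℓ),(m)}(e,f) defined by the sum ∑_ν c^{ν*}_{(1^ℓ),(m)} (e|ν−(ℓ))(f|ν*−(m))/h(ν) equals C(e−1, m−1)·C(f−1, ℓ−1)·(ef − ℓm)/(ℓm). -/

import Mathlib

open scoped Classical BigOperators
noncomputable section

namespace ChernTensor

/-- The rectangular Young diagram with `r` rows each of length `c`. -/
def rect (r c : ℕ) : YoungDiagram :=
  ⟨Finset.range r ×ˢ Finset.range c, by
    intro p q hle hp
    simp only [Finset.coe_product, Set.mem_prod, Finset.mem_coe, Finset.mem_range] at hp ⊢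
    exact ⟨lt_of_le_of_lt hle.1 hp.1, lt_of_le_of_lt hle.2 hp.2⟩⟩

/-- The complement of a diagram `d` (rotated by 180°) inside the rectangle
with `r` rows and `c` columns. -/
def complIn (r c : ℕ) (d : YoungDiagram) : YoungDiagram :=
  ⟨(Finset.range r ×ˢ Finset.range c).filter
      (fun p => (r - 1 - p.1, c - 1 - p.2) ∉ d), by
    intro p q hle hp
    simp only [Finset.coe_filter, Set.mem_setOf_eq, Finset.mem_product,
      Finset.mem_range] at hp ⊢
    refine ⟨⟨lt_of_le_of_lt hle.1 hp.1.1, lt_of_le_of_lt hle.2 hp.1.2⟩, fun hq => hp.2 ?_⟩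
    exact d.isLowerSet (Prod.mk_le_mk.mpr ⟨Nat.sub_le_sub_left hle.1 _,
      Nat.sub_le_sub_left hle.2 _⟩) hq⟩

/-- The complement `e×f − ν̃ = (e − ν*_f, …, e − ν*_1)` of `ν` in the rectangle
with `f` rows each of length `e` (the paper's `e×f`). -/
def rectCompl (e f : ℕ) (ν : YoungDiagram) : YoungDiagram :=
  complIn f e ν.transpose

/-- The product of the hook lengths of all boxes of a Young diagram, as a rational. -/
def hookProd (ν : YoungDiagram) : ℚ :=
  ∏ c ∈ ν.cells, ((ν.rowLen c.1 + ν.colLen c.2 - c.1 - c.2 - 1 : ℕ) : ℚ)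

/-- The content polynomial `(n | ρ) = ∏_{(i,j) ∈ ρ} (n + j − i)` evaluated at `n`. -/
def contPoly (n : ℚ) (ρ : YoungDiagram) : ℚ :=
  ∏ c ∈ ρ.cells, (n + (c.2 : ℚ) - (c.1 : ℚ))

/-- The skew content polynomial `(n | ρ − σ) = ∏_{(i,j) ∈ ρ/σ} (n + j − i)`. -/
def skewContPoly (n : ℚ) (ρ σ : YoungDiagram) : ℚ :=
  ∏ c ∈ ρ.cells \ σ.cells, (n + (c.2 : ℚ) - (c.1 : ℚ))

/-- `T : ℕ×ℕ → ℕ` is a Littlewood–Richardson skew tableau of shape `ν/λ` and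
content `μ`: entries (≥ 1) exactly on the skew cells, rows weakly increasing,
columns strictly increasing, exactly `μ_k` entries equal to `k` (1-indexed),
and the reverse reading word is a lattice word. -/
def IsLRTableau (lam mu nu : YoungDiagram) (T : ℕ × ℕ → ℕ) : Prop :=
  (∀ c : ℕ × ℕ, c ∈ nu.cells \ lam.cells ↔ T c ≠ 0) ∧
  (∀ i j j', j ≤ j' → (i, j) ∈ nu.cells \ lam.cells → (i, j') ∈ nu.cells \ lam.cells →
    T (i, j) ≤ T (i, j')) ∧
  (∀ i i' j, i < i' → (i, j) ∈ nu.cells \ lam.cells → (i', j) ∈ nu.cells \ lam.cells →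
    T (i, j) < T (i', j)) ∧
  (∀ k : ℕ, ((nu.cells \ lam.cells).filter (fun c => T c = k + 1)).card = mu.rowLen k) ∧
  (∀ c ∈ nu.cells \ lam.cells, ∀ k : ℕ,
    (((nu.cells \ lam.cells).filter
        (fun d => (d.1 < c.1 ∨ (d.1 = c.1 ∧ c.2 ≤ d.2)) ∧ T d = k + 2)).card ≤
     ((nu.cells \ lam.cells).filter
        (fun d => (d.1 < c.1 ∨ (d.1 = c.1 ∧ c.2 ≤ d.2)) ∧ T d = k + 1)).card))

/-- The Littlewood–Richardson coefficient `c^ν_{λμ}`, defined as the number of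
Littlewood–Richardson skew tableaux of shape `ν/λ` and content `μ`. -/
def lrCoeff (lam mu nu : YoungDiagram) : ℕ :=
  if lam ≤ nu then Nat.card {T : ℕ × ℕ → ℕ // IsLRTableau lam mu nu T} else 0

/-- The universal coefficient `P_{λ,μ}(e,f) = ∑_ν c^{ν*}_{λ*,μ} (e|ν−λ)(f|ν*−μ)/h(ν)`. -/
def P (lam mu : YoungDiagram) (e f : ℚ) : ℚ :=
  ∑ᶠ nu : YoungDiagram, (lrCoeff lam.transpose mu nu.transpose : ℚ) *
    skewContPoly e nu lam * skewContPoly f nu.transpose mu / hookProd nu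

/-- A semistandard filling of the cells of `lam` with values in `Fin n`:
weakly increasing along rows, strictly increasing down columns. -/
def IsSSYT (lam : YoungDiagram) {n : ℕ} (T : lam.cells → Fin n) : Prop :=
  (∀ a b : lam.cells, (a : ℕ × ℕ).1 = (b : ℕ × ℕ).1 → (a : ℕ × ℕ).2 ≤ (b : ℕ × ℕ).2 →
    T a ≤ T b) ∧
  (∀ a b : lam.cells, (a : ℕ × ℕ).2 = (b : ℕ × ℕ).2 → (a : ℕ × ℕ).1 < (b : ℕ × ℕ).1 →
    T a < T b)

/-- The Schur polynomial `s_λ(x₁,…,x_n)` evaluated at `x`, as the generating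
function of semistandard tableaux. -/
def schur (lam : YoungDiagram) {n : ℕ} (x : Fin n → ℚ) : ℚ :=
  ∑ᶠ T : {T : lam.cells → Fin n // IsSSYT lam T}, ∏ c : lam.cells, x (T.1 c)

/-- The generalized binomial coefficient `C(a, b) = a(a−1)⋯(a−b+1)/b!`. -/
def gbinom (a : ℚ) (b : ℕ) : ℚ :=
  (∏ i ∈ Finset.range b, (a - i)) / (Nat.factorial b : ℚ)


lemma mem_rect {r c : ℕ} {x : ℕ × ℕ} : x ∈ rect r c ↔ x.1 < r ∧ x.2 < c := by
  cases x; rw [← YoungDiagram.mem_cells]; simp [rect, YoungDiagram.mem_mk]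

def hook (a b : ℕ) : YoungDiagram := rect 1 a ⊔ rect (b+1) 1

lemma mem_hook {a b : ℕ} {x : ℕ × ℕ} :
    x ∈ hook a b ↔ (x.1 = 0 ∧ x.2 < a) ∨ (x.2 = 0 ∧ x.1 < b + 1) := by
  simp only [hook, YoungDiagram.mem_sup, mem_rect, Nat.lt_one_iff]; tauto

lemma hook_transpose (a b : ℕ) : (hook a b).transpose = hook (b+1) (a-1) := by
  ext ⟨i, j⟩
  rw [YoungDiagram.mem_cells, YoungDiagram.mem_cells, YoungDiagram.mem_transpose]
  simp only [mem_hook, Prod.swap]; omega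

lemma rect_transpose (r c : ℕ) : (rect r c).transpose = rect c r := by
  ext ⟨i, j⟩
  rw [YoungDiagram.mem_cells, YoungDiagram.mem_cells, YoungDiagram.mem_transpose]
  simp only [mem_rect, Prod.swap]; tauto

lemma rowLen_hook_zero {a b : ℕ} (ha : 1 ≤ a) : (hook a b).rowLen 0 = a := by
  have h1 : ((0 : ℕ), a - 1) ∈ hook a b := mem_hook.2 (Or.inl ⟨rfl, by omega⟩)
  have h2 : ((0 : ℕ), a) ∉ hook a b := by rw [mem_hook]; omega
  rw [YoungDiagram.mem_iff_lt_rowLen] at h1 h2; omega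

lemma rowLen_hook_pos {a b i : ℕ} (hi : 1 ≤ i) (hib : i ≤ b) : (hook a b).rowLen i = 1 := by
  have h1 : (i, (0 : ℕ)) ∈ hook a b := mem_hook.2 (Or.inr ⟨rfl, by omega⟩)
  have h2 : (i, (1 : ℕ)) ∉ hook a b := by rw [mem_hook]; omega
  rw [YoungDiagram.mem_iff_lt_rowLen] at h1 h2; omega

lemma colLen_hook_zero {a b : ℕ} : (hook a b).colLen 0 = b + 1 := by
  have h1 : (b, (0 : ℕ)) ∈ hook a b := mem_hook.2 (Or.inr ⟨rfl, by omega⟩)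
  have h2 : (b + 1, (0 : ℕ)) ∉ hook a b := by rw [mem_hook]; omega
  rw [YoungDiagram.mem_iff_lt_colLen] at h1 h2; omega

lemma colLen_hook_pos {a b j : ℕ} (hj : 1 ≤ j) (hja : j < a) : (hook a b).colLen j = 1 := by
  have h1 : ((0 : ℕ), j) ∈ hook a b := mem_hook.2 (Or.inl ⟨rfl, hja⟩)
  have h2 : ((1 : ℕ), j) ∉ hook a b := by rw [mem_hook]; omega
  rw [YoungDiagram.mem_iff_lt_colLen] at h1 h2; omega

lemma hook_cells_eq {a b : ℕ} (ha : 1 ≤ a) :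
    (hook a b).cells = ({0} ×ˢ Finset.range a) ∪ (Finset.Ico 1 (b+1) ×ˢ {0}) := by
  ext ⟨i, j⟩
  simp only [Finset.mem_union, Finset.mem_product, Finset.mem_singleton, Finset.mem_range,
    Finset.mem_Ico, YoungDiagram.mem_cells, mem_hook]
  omega

lemma hook_card {a b : ℕ} (ha : 1 ≤ a) : (hook a b).cells.card = a + b := by
  rw [hook_cells_eq ha, Finset.card_union_of_disjoint, Finset.card_product,
    Finset.card_product]
  · simp [Nat.card_Ico]
  · rw [Finset.disjoint_left]
    rintro ⟨i, j⟩ h1 h2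
    simp only [Finset.mem_product, Finset.mem_singleton, Finset.mem_Ico] at h1 h2
    omega

lemma prod_Ico_sub (n : ℕ) : (∏ j ∈ Finset.Ico 1 n, (n - j)) = (n - 1).factorial := by
  rcases Nat.eq_zero_or_pos n with h | h
  · subst h; simp
  · have : ∏ j ∈ Finset.Ico 1 n, (n - j) = ∏ j ∈ Finset.Ico 1 n, j := by
      apply Finset.prod_nbij' (fun j => n - j) (fun j => n - j) <;>
        intro j hj <;> simp only [Finset.mem_Ico] at * <;> omega
    rw [this, show n = (n-1) + 1 by omega, Finset.prod_Ico_id_eq_factorial]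
    simp

lemma hookProd_hook {a b : ℕ} (ha : 1 ≤ a) :
    hookProd (hook a b) = ((a + b) * (a-1).factorial * b.factorial : ℕ) := by
  rw [hookProd, hook_cells_eq ha, Finset.prod_union]
  · rw [Finset.prod_product, Finset.prod_product]
    simp only [Finset.prod_singleton]
    have hrow : ∏ j ∈ Finset.range a,
        ((hook a b).rowLen 0 + (hook a b).colLen j - 0 - j - 1)
        = (a + b) * (a-1).factorial := by
      rw [Finset.range_eq_Ico, Finset.prod_eq_prod_Ico_succ_bot (by omega : 0 < a)]
      have h0 : ((hook a b).rowLen 0 + (hook a b).colLen 0 - 0 - 0 - 1 : ℕ) = a + b := by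
        rw [rowLen_hook_zero ha, colLen_hook_zero]; omega
      have hrest : ∏ j ∈ Finset.Ico 1 a,
          ((hook a b).rowLen 0 + (hook a b).colLen j - 0 - j - 1)
          = ∏ j ∈ Finset.Ico 1 a, (a - j) := by
        apply Finset.prod_congr rfl
        intro j hj
        simp only [Finset.mem_Ico] at hj
        rw [rowLen_hook_zero ha, colLen_hook_pos hj.1 hj.2]
        omega
      rw [h0, hrest, prod_Ico_sub a]
    have hcol : ∏ i ∈ Finset.Ico 1 (b+1),
        ((hook a b).rowLen i + (hook a b).colLen 0 - i - 0 - 1)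
        = b.factorial := by
      have h1 : ∏ i ∈ Finset.Ico 1 (b+1),
          ((hook a b).rowLen i + (hook a b).colLen 0 - i - 0 - 1)
          = ∏ i ∈ Finset.Ico 1 (b+1), (b + 1 - i) := by
        apply Finset.prod_congr rfl
        intro i hi
        simp only [Finset.mem_Ico] at hi
        rw [rowLen_hook_pos hi.1 (by omega), colLen_hook_zero]
        omega
      rw [h1, prod_Ico_sub (b+1)]
      simp
    rw [← Nat.cast_prod, ← Nat.cast_prod, hrow, hcol, ← Nat.cast_mul]
  · rw [Finset.disjoint_left]
    rintro ⟨i, j⟩ h1 h2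
    simp only [Finset.mem_product, Finset.mem_singleton, Finset.mem_Ico] at h1 h2
    omega



lemma prod_col_skew (n : ℚ) (s t : ℕ) :
    ∏ c ∈ (Finset.Ico s t ×ˢ ({0} : Finset ℕ)), (n + (c.2 : ℚ) - (c.1 : ℚ))
      = ∏ i ∈ Finset.Ico s t, (n - i) := by
  rw [Finset.prod_product]
  apply Finset.prod_congr rfl
  intro i _
  rw [Finset.prod_singleton]
  push_cast; ring

lemma scp1 {l m : ℕ} (hl : 1 ≤ l) (hm : 1 ≤ m) (e : ℚ) :
    skewContPoly e (hook (l+1) (m-1)) (rect 1 l)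
      = (e + l) * ∏ i ∈ Finset.Ico 1 m, (e - i) := by
  have hset : (hook (l+1) (m-1)).cells \ (rect 1 l).cells
      = insert ((0:ℕ), l) (Finset.Ico 1 m ×ˢ ({0} : Finset ℕ)) := by
    ext ⟨i, j⟩
    simp only [Finset.mem_sdiff, YoungDiagram.mem_cells, mem_hook, mem_rect, Finset.mem_insert,
      Finset.mem_product, Finset.mem_singleton, Finset.mem_Ico, Prod.mk.injEq]
    omega
  rw [skewContPoly, hset, Finset.prod_insert, prod_col_skew]
  · push_cast; ring
  · simp only [Finset.mem_product, Finset.mem_singleton, Finset.mem_Ico]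
    omega

lemma scp2 {l m : ℕ} (hm : 1 ≤ m) (f : ℚ) :
    skewContPoly f (hook m l) (rect 1 m) = ∏ i ∈ Finset.Ico 1 (l+1), (f - i) := by
  have hset : (hook m l).cells \ (rect 1 m).cells
      = Finset.Ico 1 (l+1) ×ˢ ({0} : Finset ℕ) := by
    ext ⟨i, j⟩
    simp only [Finset.mem_sdiff, YoungDiagram.mem_cells, mem_hook, mem_rect,
      Finset.mem_product, Finset.mem_singleton, Finset.mem_Ico]
    omega
  rw [skewContPoly, hset, prod_col_skew]

lemma scp3 {l m : ℕ} (hl : 1 ≤ l) (e : ℚ) :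
    skewContPoly e (hook l m) (rect 1 l) = ∏ i ∈ Finset.Ico 1 (m+1), (e - i) := by
  have hset : (hook l m).cells \ (rect 1 l).cells
      = Finset.Ico 1 (m+1) ×ˢ ({0} : Finset ℕ) := by
    ext ⟨i, j⟩
    simp only [Finset.mem_sdiff, YoungDiagram.mem_cells, mem_hook, mem_rect,
      Finset.mem_product, Finset.mem_singleton, Finset.mem_Ico]
    omega
  rw [skewContPoly, hset, prod_col_skew]

lemma scp4 {l m : ℕ} (hl : 1 ≤ l) (hm : 1 ≤ m) (f : ℚ) :
    skewContPoly f (hook (m+1) (l-1)) (rect 1 m)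
      = (f + m) * ∏ i ∈ Finset.Ico 1 l, (f - i) := by
  have hset : (hook (m+1) (l-1)).cells \ (rect 1 m).cells
      = insert ((0:ℕ), m) (Finset.Ico 1 l ×ˢ ({0} : Finset ℕ)) := by
    ext ⟨i, j⟩
    simp only [Finset.mem_sdiff, YoungDiagram.mem_cells, mem_hook, mem_rect, Finset.mem_insert,
      Finset.mem_product, Finset.mem_singleton, Finset.mem_Ico, Prod.mk.injEq]
    omega
  rw [skewContPoly, hset, Finset.prod_insert, prod_col_skew]
  · push_cast; ring
  · simp only [Finset.mem_product, Finset.mem_singleton, Finset.mem_Ico]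
    omega


-- === LR analysis ===
lemma rowLen_rect_zero {m : ℕ} : (rect 1 m).rowLen 0 = m := by
  rcases Nat.eq_zero_or_pos m with h | h
  · subst h
    have : ((0:ℕ), (0:ℕ)) ∉ rect 1 0 := by rw [mem_rect]; omega
    rw [YoungDiagram.mem_iff_lt_rowLen] at this; omega
  · have h1 : ((0:ℕ), m - 1) ∈ rect 1 m := mem_rect.2 ⟨by omega, by omega⟩
    have h2 : ((0:ℕ), m) ∉ rect 1 m := by rw [mem_rect]; omega
    rw [YoungDiagram.mem_iff_lt_rowLen] at h1 h2; omega

lemma rowLen_rect_pos {m k : ℕ} (hk : 1 ≤ k) : (rect 1 m).rowLen k = 0 := by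
  have h2 : (k, (0:ℕ)) ∉ rect 1 m := by rw [mem_rect]; omega
  rw [YoungDiagram.mem_iff_lt_rowLen] at h2; omega

lemma entries_one {l m : ℕ} {D : YoungDiagram} {T : ℕ × ℕ → ℕ}
    (hT : IsLRTableau (rect l 1) (rect 1 m) D T) :
    ∀ c ∈ D.cells \ (rect l 1).cells, T c = 1 := by
  intro c hc
  obtain ⟨h1, -, -, h4, -⟩ := hT
  have hne : T c ≠ 0 := (h1 c).1 hc
  by_contra hne1
  have hk : 1 ≤ T c - 1 := by omega
  have h := h4 (T c - 1)
  rw [rowLen_rect_pos hk] at h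
  have hmem : c ∈ (D.cells \ (rect l 1).cells).filter (fun d => T d = (T c - 1) + 1) := by
    rw [Finset.mem_filter]
    exact ⟨hc, by omega⟩
  have := Finset.card_pos.2 ⟨c, hmem⟩
  omega

lemma T_unique {l m : ℕ} {D : YoungDiagram} {T : ℕ × ℕ → ℕ}
    (hT : IsLRTableau (rect l 1) (rect 1 m) D T) :
    T = fun c => if c ∈ D.cells \ (rect l 1).cells then 1 else 0 := by
  funext c
  by_cases hc : c ∈ D.cells \ (rect l 1).cells
  · simp only [hc, if_true]
    exact entries_one hT c hc
  · simp only [hc, if_false]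
    by_contra h
    exact hc ((hT.1 c).2 h)

lemma skew_card_m {l m : ℕ} {D : YoungDiagram} {T : ℕ × ℕ → ℕ}
    (hT : IsLRTableau (rect l 1) (rect 1 m) D T) :
    (D.cells \ (rect l 1).cells).card = m := by
  have h := hT.2.2.2.1 0
  rw [rowLen_rect_zero] at h
  rw [← h]
  congr 1
  apply (Finset.filter_true_of_mem _).symm
  intro c hc
  exact entries_one hT c hc

lemma classify {l m : ℕ} (hl : 0 < l) (hm : 0 < m) {D : YoungDiagram} {T : ℕ × ℕ → ℕ}
    (hle : rect l 1 ≤ D) (hT : IsLRTableau (rect l 1) (rect 1 m) D T) :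
    D = hook m l ∨ D = hook (m+1) (l-1) := by
  have hone := entries_one hT
  have hdist : ∀ i i' j, i < i' → (i, j) ∈ D.cells \ (rect l 1).cells →
      (i', j) ∈ D.cells \ (rect l 1).cells → False := by
    intro i i' j hii ha hb
    have := hT.2.2.1 i i' j hii ha hb
    rw [hone _ ha, hone _ hb] at this
    omega
  have hmem_skew : ∀ i j : ℕ, (i, j) ∈ D.cells \ (rect l 1).cells ↔
      ((i, j) ∈ D ∧ ¬(i < l ∧ j < 1)) := by
    intro i j
    rw [Finset.mem_sdiff, YoungDiagram.mem_cells, YoungDiagram.mem_cells, mem_rect]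
  -- no cell strictly inside
  have hC : ∀ i j : ℕ, 1 ≤ i → 1 ≤ j → (i, j) ∉ D := by
    intro i j hi hj hmem
    have hup : (i - 1, j) ∈ D := D.up_left_mem (by omega) le_rfl hmem
    exact hdist (i-1) i j (by omega)
      ((hmem_skew _ _).2 ⟨hup, by omega⟩) ((hmem_skew _ _).2 ⟨hmem, by omega⟩)
  -- column 0 is short
  have hD2 : (l + 1, (0:ℕ)) ∉ D := by
    intro hmem
    have hup : (l, (0:ℕ)) ∈ D := D.up_left_mem (by omega) le_rfl hmem
    exact hdist l (l+1) 0 (by omega)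
      ((hmem_skew _ _).2 ⟨hup, by omega⟩) ((hmem_skew _ _).2 ⟨hmem, by omega⟩)
  have hsub : (rect l 1).cells ⊆ D.cells := YoungDiagram.cells_subset_iff.2 hle
  have h00 : ((0:ℕ), (0:ℕ)) ∈ D := by
    rw [← YoungDiagram.mem_cells]
    exact hsub (by rw [YoungDiagram.mem_cells, mem_rect]; omega)
  have hl10 : (l - 1, (0:ℕ)) ∈ D := by
    rw [← YoungDiagram.mem_cells]
    exact hsub (by rw [YoungDiagram.mem_cells, mem_rect]; omega)
  set a := D.rowLen 0 with ha_def
  set cl := D.colLen 0 with hcl_def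
  have ha1 : 1 ≤ a := by
    have := YoungDiagram.mem_iff_lt_rowLen.1 h00; omega
  have hcl_lb : l ≤ cl := by
    have := YoungDiagram.mem_iff_lt_colLen.1 hl10; omega
  have hcl_ub : cl ≤ l + 1 := by
    by_contra h
    exact hD2 (YoungDiagram.mem_iff_lt_colLen.2 (by omega))
  have hDeq : D = hook a (cl - 1) := by
    ext ⟨i, j⟩
    rw [YoungDiagram.mem_cells, YoungDiagram.mem_cells, mem_hook]
    constructor
    · intro h
      rcases Nat.eq_zero_or_pos i with hi | hi
      · subst hi
        exact Or.inl ⟨rfl, YoungDiagram.mem_iff_lt_rowLen.1 h⟩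
      · rcases Nat.eq_zero_or_pos j with hj | hj
        · subst hj
          have := YoungDiagram.mem_iff_lt_colLen.1 h
          exact Or.inr ⟨rfl, by omega⟩
        · exact absurd h (hC i j hi hj)
    · rintro (⟨hi, hj⟩ | ⟨hj, hi⟩)
      · subst hi; exact YoungDiagram.mem_iff_lt_rowLen.2 hj
      · subst hj; exact YoungDiagram.mem_iff_lt_colLen.2 (by omega)
  have hcard : D.cells.card = a + (cl - 1) := by rw [hDeq]; exact hook_card ha1
  have hrect_card : (rect l 1).cells.card = l := by
    rw [rect]; simp
  have hskew : (D.cells \ (rect l 1).cells).card = m := skew_card_m hT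
  rw [Finset.card_sdiff_of_subset hsub, hcard, hrect_card] at hskew
  rcases (by omega : cl = l ∨ cl = l + 1) with h | h
  · right
    rw [hDeq, h]
    congr 1
    omega
  · left
    rw [hDeq, h]
    congr 1 <;> omega

def T0 (l : ℕ) (D : YoungDiagram) : ℕ × ℕ → ℕ :=
  fun c => if c ∈ D.cells \ (rect l 1).cells then 1 else 0

lemma T0_le_one {l : ℕ} {D : YoungDiagram} (c : ℕ × ℕ) : T0 l D c ≤ 1 := by
  rw [T0]; split <;> omega

lemma isLR_T0 {l m : ℕ} {D : YoungDiagram}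
    (hcols : ∀ i i' j, i < i' → (i, j) ∈ D.cells \ (rect l 1).cells →
      (i', j) ∈ D.cells \ (rect l 1).cells → False)
    (hcard : (D.cells \ (rect l 1).cells).card = m) :
    IsLRTableau (rect l 1) (rect 1 m) D (T0 l D) := by
  refine ⟨?_, ?_, ?_, ?_, ?_⟩
  · intro c
    rw [T0]
    split <;> simp_all
  · intro i j j' _ h1 h2
    rw [T0, T0, if_pos h1, if_pos h2]
  · intro i i' j hii h1 h2
    exact absurd (hcols i i' j hii h1 h2) not_false
  · intro k
    rcases Nat.eq_zero_or_pos k with hk | hk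
    · subst hk
      rw [rowLen_rect_zero, ← hcard]
      congr 1
      apply Finset.filter_true_of_mem
      intro c hc
      rw [T0, if_pos hc]
    · rw [rowLen_rect_pos hk, Finset.card_eq_zero, Finset.filter_eq_empty_iff]
      intro c _
      have := T0_le_one (l := l) (D := D) c
      omega
  · intro c _ k
    have : ((D.cells \ (rect l 1).cells).filter
        (fun d => (d.1 < c.1 ∨ (d.1 = c.1 ∧ c.2 ≤ d.2)) ∧ T0 l D d = k + 2)).card = 0 := by
      rw [Finset.card_eq_zero, Finset.filter_eq_empty_iff]
      intro d _
      have := T0_le_one (l := l) (D := D) d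
      omega
    omega

lemma mem_skew_hook1 {l m i j : ℕ} (hl : 0 < l) :
    ((i, j) ∈ (hook m l).cells \ (rect l 1).cells) ↔
      ((i = 0 ∧ 1 ≤ j ∧ j < m) ∨ (i = l ∧ j = 0)) := by
  rw [Finset.mem_sdiff, YoungDiagram.mem_cells, YoungDiagram.mem_cells, mem_hook, mem_rect]
  simp only
  omega

lemma mem_skew_hook2 {l m i j : ℕ} (hl : 0 < l) :
    ((i, j) ∈ (hook (m+1) (l-1)).cells \ (rect l 1).cells) ↔
      (i = 0 ∧ 1 ≤ j ∧ j ≤ m) := by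
  rw [Finset.mem_sdiff, YoungDiagram.mem_cells, YoungDiagram.mem_cells, mem_hook, mem_rect]
  simp only
  omega

lemma skew_hook1_eq {l m : ℕ} (hl : 0 < l) :
    (hook m l).cells \ (rect l 1).cells
      = insert (l, 0) (({0} : Finset ℕ) ×ˢ Finset.Ico 1 m) := by
  ext ⟨i, j⟩
  rw [mem_skew_hook1 hl]
  simp only [Finset.mem_insert, Finset.mem_product, Finset.mem_singleton, Finset.mem_Ico,
    Prod.mk.injEq]
  omega

lemma skew_hook2_eq {l m : ℕ} (hl : 0 < l) :
    (hook (m+1) (l-1)).cells \ (rect l 1).cells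
      = ({0} : Finset ℕ) ×ˢ Finset.Ico 1 (m+1) := by
  ext ⟨i, j⟩
  rw [mem_skew_hook2 hl]
  simp only [Finset.mem_product, Finset.mem_singleton, Finset.mem_Ico]
  omega

lemma lrCoeff_hook1 {l m : ℕ} (hl : 0 < l) (hm : 0 < m) :
    lrCoeff (rect l 1) (rect 1 m) (hook m l) = 1 := by
  have hle : rect l 1 ≤ hook m l := by
    rw [← YoungDiagram.cells_subset_iff]
    intro ⟨i, j⟩ hc
    rw [YoungDiagram.mem_cells, mem_rect] at hc
    rw [YoungDiagram.mem_cells, mem_hook]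
    omega
  rw [lrCoeff, if_pos hle, Nat.card_eq_one_iff_unique]
  constructor
  · constructor
    intro ⟨T, hT⟩ ⟨T', hT'⟩
    exact Subtype.ext ((T_unique hT).trans (T_unique hT').symm)
  · refine ⟨T0 l (hook m l), isLR_T0 ?_ ?_⟩
    · intro i i' j hii h1 h2
      rw [mem_skew_hook1 hl] at h1 h2
      omega
    · rw [skew_hook1_eq hl, Finset.card_insert_of_notMem, Finset.card_product]
      · simp [Nat.card_Ico]; omega
      · simp only [Finset.mem_product, Finset.mem_singleton, Finset.mem_Ico]
        omega

lemma lrCoeff_hook2 {l m : ℕ} (hl : 0 < l) (hm : 0 < m) :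
    lrCoeff (rect l 1) (rect 1 m) (hook (m+1) (l-1)) = 1 := by
  have hle : rect l 1 ≤ hook (m+1) (l-1) := by
    rw [← YoungDiagram.cells_subset_iff]
    intro ⟨i, j⟩ hc
    rw [YoungDiagram.mem_cells, mem_rect] at hc
    rw [YoungDiagram.mem_cells, mem_hook]
    omega
  rw [lrCoeff, if_pos hle, Nat.card_eq_one_iff_unique]
  constructor
  · constructor
    intro ⟨T, hT⟩ ⟨T', hT'⟩
    exact Subtype.ext ((T_unique hT).trans (T_unique hT').symm)
  · refine ⟨T0 l (hook (m+1) (l-1)), isLR_T0 ?_ ?_⟩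
    · intro i i' j hii h1 h2
      rw [mem_skew_hook2 hl] at h1 h2
      omega
    · rw [skew_hook2_eq hl, Finset.card_product]
      simp [Nat.card_Ico]

lemma lrCoeff_eq_zero {l m : ℕ} (hl : 0 < l) (hm : 0 < m) {D : YoungDiagram}
    (hD1 : D ≠ hook m l) (hD2 : D ≠ hook (m+1) (l-1)) :
    lrCoeff (rect l 1) (rect 1 m) D = 0 := by
  rw [lrCoeff]
  split
  · have : IsEmpty {T : ℕ × ℕ → ℕ // IsLRTableau (rect l 1) (rect 1 m) D T} := by
      constructor
      intro ⟨T, hT⟩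
      rcases classify hl hm ‹rect l 1 ≤ D› hT with h | h
      · exact hD1 h
      · exact hD2 h
    exact Nat.card_of_isEmpty
  · rfl


lemma gbinom_sub_one (x : ℚ) (n : ℕ) :
    gbinom (x - 1) n = (∏ i ∈ Finset.Ico 1 (n+1), (x - i)) / n.factorial := by
  rw [gbinom, Finset.prod_Ico_eq_prod_range]
  congr 1
  simp only [Nat.add_sub_cancel]
  apply Finset.prod_congr rfl
  intro k _
  push_cast; ring

/-- `P_{(ℓ),(m)}(e,f) = C(e−1, m−1)·C(f−1, ℓ−1)·(ef − ℓm)/(ℓm)`. -/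
theorem P_row_row (ℓ m : ℕ) (hl : 0 < ℓ) (hm : 0 < m) (e f : ℚ) :
    P (rect 1 ℓ) (rect 1 m) e f =
      gbinom (e - 1) (m - 1) * gbinom (f - 1) (ℓ - 1) *
        (e * f - (ℓ : ℚ) * m) / ((ℓ : ℚ) * m) := by
  obtain ⟨l', rfl⟩ : ∃ l', ℓ = l' + 1 := ⟨ℓ - 1, by omega⟩
  obtain ⟨m', rfl⟩ : ∃ m', m = m' + 1 := ⟨m - 1, by omega⟩
  set l : ℕ := l' + 1
  set m : ℕ := m' + 1
  have hl1 : (1:ℕ) ≤ l := by omega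
  have hm1 : (1:ℕ) ≤ m := by omega
  have ht1 : (hook (l+1) (m-1)).transpose = hook m l := by
    rw [hook_transpose]; congr 1 <;> omega
  have ht2 : (hook l m).transpose = hook (m+1) (l-1) := hook_transpose l m
  have hne : hook (l+1) (m-1) ≠ hook l m := by
    intro h
    have h1 : ((0:ℕ), l) ∈ hook (l+1) (m-1) := mem_hook.2 (Or.inl ⟨rfl, by omega⟩)
    rw [h, mem_hook] at h1
    omega
  rw [P, rect_transpose]
  rw [finsum_eq_finset_sum_of_support_subset _
    (s := ({hook (l+1) (m-1), hook l m} : Finset YoungDiagram))]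
  · rw [Finset.sum_pair hne]
    rw [ht1, ht2, lrCoeff_hook1 hl hm, lrCoeff_hook2 hl hm,
      scp1 hl1 hm1, scp2 hm1, scp3 hl1, scp4 hl1 hm1,
      hookProd_hook (by omega : 1 ≤ l + 1), hookProd_hook hl1,
      gbinom_sub_one, gbinom_sub_one]
    have hsplit1 : ∏ i ∈ Finset.Ico 1 (l+1), (f - (i:ℚ))
        = (∏ i ∈ Finset.Ico 1 l, (f - (i:ℚ))) * (f - l) :=
      Finset.prod_Ico_succ_top hl1 _
    have hsplit2 : ∏ i ∈ Finset.Ico 1 (m+1), (e - (i:ℚ))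
        = (∏ i ∈ Finset.Ico 1 m, (e - (i:ℚ))) * (e - m) :=
      Finset.prod_Ico_succ_top hm1 _
    have hidx1 : m - 1 + 1 = m := by omega
    have hidx2 : l - 1 + 1 = l := by omega
    rw [hidx1, hidx2, hsplit1, hsplit2]
    set A : ℚ := ∏ i ∈ Finset.Ico 1 m, (e - (i:ℚ)) with hA
    set B : ℚ := ∏ i ∈ Finset.Ico 1 l, (f - (i:ℚ)) with hB
    have e1 : l + 1 - 1 = l := by omega
    have e2 : m - 1 = m' := by omega
    have e3 : l - 1 = l' := by omega
    rw [e1, e2, e3]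
    have hfl : (l.factorial : ℚ) = l * l'.factorial := by
      rw [show l.factorial = l * l'.factorial from by rw [show l = l' + 1 from rfl, Nat.factorial_succ]]
      push_cast; ring
    have hfm : (m.factorial : ℚ) = m * m'.factorial := by
      rw [show m.factorial = m * m'.factorial from by rw [show m = m' + 1 from rfl, Nat.factorial_succ]]
      push_cast; ring
    have hl0 : ((l:ℚ)) ≠ 0 := by positivity
    have hm0 : ((m:ℚ)) ≠ 0 := by positivity
    have hlm0 : ((l:ℚ) + m) ≠ 0 := by positivity
    have hfl0 : ((l'.factorial : ℚ)) ≠ 0 := by positivity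
    have hfm0 : ((m'.factorial : ℚ)) ≠ 0 := by positivity
    have c1 : ((l':ℚ) + 1) ≠ 0 := by positivity
    have c2 : ((m':ℚ) + 1) ≠ 0 := by positivity
    have c3 : ((l':ℚ) + 1 + 1 + m') ≠ 0 := by positivity
    have c4 : ((l':ℚ) + 1 + ((m':ℚ) + 1)) ≠ 0 := by positivity
    push_cast [hfl, hfm]
    field_simp
    simp only [l, m]
    push_cast
    ring
  · intro nu hnu
    simp only [Function.mem_support] at hnu
    by_contra hmem
    simp only [Finset.coe_insert, Finset.coe_singleton, Set.mem_insert_iff,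
      Set.mem_singleton_iff, not_or] at hmem
    have hz : lrCoeff (rect l 1) (rect 1 m) nu.transpose = 0 := by
      apply lrCoeff_eq_zero hl hm
      · intro h
        apply hmem.1
        rw [← YoungDiagram.transpose_transpose nu, h, hook_transpose]
      · intro h
        apply hmem.2
        rw [← YoungDiagram.transpose_transpose nu, h, hook_transpose]
        congr 1
    rw [hz] at hnu
    simp at hnu


end ChernTensor
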